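/- arXiv:1704.00917 — 7 statements merged into one kernel-verified Lean document; each statement's English description precedes it below -/
import Mathlib

section
/- Let ν be an s-finite measure on α and η a σ-finite measure on β. Let f : α → ℝ≥0∞ be measurable and let g : α × β → ℝ≥0∞ be measurable, and let κ : α → Measure β be the measurable family κ w = η.withDensity (fun z => g (w, z)). Then (ν.withDensity f).bind κ = η.withDensity (fun z => ∫⁻ w, f w * g (w, z) ∂ν). In words: drawing an argument w with density f and then sampling from a distribution with density g(w,·) yields the distribution with density z ↦ ∫ f(w)·g(w,z) dw. -/
open MeasureTheory
open scoped ENNReal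

theorem bind_withDensity_random_rnd {α β : Type*} [MeasurableSpace α] [MeasurableSpace β]
    (ν : Measure α) [SFinite ν] (η : Measure β) [SigmaFinite η]
    (f : α → ℝ≥0∞) (hf : Measurable f)
    (g : α × β → ℝ≥0∞) (hg : Measurable g) :
    (ν.withDensity f).bind (fun w => η.withDensity (fun z => g (w, z))) =
      η.withDensity (fun z => ∫⁻ w, f w * g (w, z) ∂ν) := by
  have hκ : Measurable fun w => η.withDensity fun z => g (w, z) := measurable_withDensity hg
  ext s hs
  calc (ν.withDensity f).bind (fun w => η.withDensity fun z => g (w, z)) s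
      = ∫⁻ w, ∫⁻ z in s, g (w, z) ∂η ∂ν.withDensity f := by
        simp only [Measure.bind_apply hs hκ.aemeasurable, withDensity_apply _ hs]
    _ = ∫⁻ w, f w * ∫⁻ z in s, g (w, z) ∂η ∂ν :=
        lintegral_withDensity_eq_lintegral_mul _ hf hg.lintegral_prod_right'
    _ = ∫⁻ w, ∫⁻ z in s, f w * g (w, z) ∂η ∂ν :=
        lintegral_congr fun w => (lintegral_const_mul _ (hg.comp measurable_prodMk_left)).symm
    _ = ∫⁻ z in s, ∫⁻ w, f w * g (w, z) ∂ν ∂η :=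
        lintegral_lintegral_swap ((hf.comp measurable_fst).mul hg).aemeasurable
    _ = η.withDensity (fun z => ∫⁻ w, f w * g (w, z) ∂ν) s := (withDensity_apply _ hs).symm
end

section
/- Let ν be a σ-finite measure on α and ρ a σ-finite measure on β. Let f : α → ℝ≥0∞ and g : α × β → ℝ≥0∞ be measurable. Then the measure (ν.withDensity f).bind (fun x => (ρ.withDensity (fun y => g (x, y))).map (Prod.mk x)) on α × β equals (ν.prod ρ).withDensity (fun p => f p.1 * g p). In words: if x is drawn with density f and then y is drawn with density g(x,·), the joint distribution of (x,y) has density f(x)·g(x,y) with respect to the product measure (the chain rule of probability). -/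
/-!
The density `f` of the first coordinate can be pushed into the kernel as the scalar `f x`, where
it becomes a constant factor of the density `g (x, ·)`. This reduces the claim to the case
`f = 1`, which is Tonelli's theorem on `ν.prod ρ`.
-/

open MeasureTheory
open scoped ENNReal

namespace MeasureTheory.Measure

variable {α β : Type*} [MeasurableSpace α] [MeasurableSpace β]

theorem withDensity_bind {μ : Measure α} {f : α → ℝ≥0∞} (hf : Measurable f)
    {κ : α → Measure β} (hκ : Measurable κ) :
    (μ.withDensity f).bind κ = μ.bind (fun x => f x • κ x) := by
  have hκ_coe {s : Set β} (hs : MeasurableSet s) : Measurable fun x => κ x s :=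
    (measurable_coe hs).comp hκ
  have hfκ : Measurable fun x => f x • κ x :=
    measurable_of_measurable_coe _ fun s hs => hf.mul (hκ_coe hs)
  ext s hs
  rw [bind_apply hs hκ.aemeasurable, bind_apply hs hfκ.aemeasurable,
    lintegral_withDensity_eq_lintegral_mul _ hf (hκ_coe hs)]
  rfl

theorem smul_map_withDensity {γ : Type*} [MeasurableSpace γ] (μ : Measure β) {h : β → ℝ≥0∞}
    (hh : Measurable h) (φ : β → γ) (c : ℝ≥0∞) :
    c • (μ.withDensity h).map φ = (μ.withDensity fun y => c * h y).map φ := by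
  rw [← Measure.map_smul, ← withDensity_smul c hh]
  rfl

theorem map_prodMk_withDensity_apply (ρ : Measure β) (g : α × β → ℝ≥0∞) (x : α)
    {s : Set (α × β)} (hs : MeasurableSet s) :
    (ρ.withDensity fun y => g (x, y)).map (Prod.mk x) s = ∫⁻ y, s.indicator g (x, y) ∂ρ := by
  rw [map_apply measurable_prodMk_left hs, withDensity_apply _ (measurable_prodMk_left hs),
    ← lintegral_indicator (measurable_prodMk_left hs)]
  rfl

theorem measurable_map_prodMk_withDensity (ρ : Measure β) [SFinite ρ] {g : α × β → ℝ≥0∞}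
    (hg : Measurable g) :
    Measurable fun x => (ρ.withDensity fun y => g (x, y)).map (Prod.mk x) :=
  measurable_of_measurable_coe _ fun s hs => by
    simp_rw [map_prodMk_withDensity_apply ρ g _ hs]
    exact (hg.indicator hs).lintegral_prod_right'

theorem bind_map_prodMk_withDensity (ν : Measure α) [SFinite ν] (ρ : Measure β) [SFinite ρ]
    {g : α × β → ℝ≥0∞} (hg : Measurable g) :
    ν.bind (fun x => (ρ.withDensity fun y => g (x, y)).map (Prod.mk x)) =
      (ν.prod ρ).withDensity g := by
  ext s hs
  rw [bind_apply hs (measurable_map_prodMk_withDensity ρ hg).aemeasurable, withDensity_apply _ hs,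
    ← lintegral_indicator hs, lintegral_prod _ (hg.indicator hs).aemeasurable]
  simp_rw [map_prodMk_withDensity_apply ρ g _ hs]

end MeasureTheory.Measure

theorem bind_withDensity_let_rnd {α β : Type*} [MeasurableSpace α] [MeasurableSpace β]
    (ν : Measure α) [SigmaFinite ν] (ρ : Measure β) [SigmaFinite ρ]
    (f : α → ℝ≥0∞) (hf : Measurable f)
    (g : α × β → ℝ≥0∞) (hg : Measurable g) :
    (ν.withDensity f).bind
        (fun x => (ρ.withDensity (fun y => g (x, y))).map (Prod.mk x)) =
      (ν.prod ρ).withDensity (fun p => f p.1 * g p) := by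
  rw [Measure.withDensity_bind hf (Measure.measurable_map_prodMk_withDensity ρ hg)]
  simp (disch := fun_prop) only [Measure.smul_map_withDensity]
  exact Measure.bind_map_prodMk_withDensity ν ρ (g := fun p => f p.1 * g p) (by fun_prop)
end

section
/- Let f : ℝ × ℝ → ℝ≥0∞ be measurable. Then ((volume.prod volume).withDensity f).map (fun p => p.1 + p.2) = volume.withDensity (fun z => ∫⁻ w, f (w, z − w)); that is, if a pair (x,y) has joint density f with respect to two-dimensional Lebesgue measure, then x + y has density z ↦ ∫ f(w, z − w) dw with respect to Lebesgue measure on ℝ. -/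
open MeasureTheory
open scoped ENNReal

theorem density_of_sum (f : ℝ × ℝ → ℝ≥0∞) (hf : Measurable f) :
    ((volume.prod volume).withDensity f).map (fun p : ℝ × ℝ => p.1 + p.2) =
      volume.withDensity (fun z => ∫⁻ w, f (w, z - w)) := by
  have hadd : Measurable fun p : ℝ × ℝ => p.1 + p.2 := measurable_fst.add measurable_snd
  ext s hs
  rw [Measure.map_apply hadd hs, withDensity_apply _ (hadd hs), withDensity_apply _ hs]
  have hF : Measurable fun p : ℝ × ℝ => s.indicator (fun z => f (p.1, z - p.1)) p.2 := by
    have : Measurable fun p : ℝ × ℝ => f (p.1, p.2 - p.1) :=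
      hf.comp (measurable_fst.prodMk (measurable_snd.sub measurable_fst))
    exact this.indicator (measurable_snd hs)
  calc ∫⁻ p in (fun p : ℝ × ℝ => p.1 + p.2) ⁻¹' s, f p ∂(volume.prod volume)
      = ∫⁻ p, ((fun p : ℝ × ℝ => p.1 + p.2) ⁻¹' s).indicator f p ∂(volume.prod volume) := by
        rw [lintegral_indicator (hadd hs)]
    _ = ∫⁻ x, ∫⁻ y, ((fun p : ℝ × ℝ => p.1 + p.2) ⁻¹' s).indicator f (x, y) := by
        exact lintegral_prod _ (hf.indicator (hadd hs)).aemeasurable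
    _ = ∫⁻ x, ∫⁻ z, ((fun p : ℝ × ℝ => p.1 + p.2) ⁻¹' s).indicator f (x, z - x) := by
        refine lintegral_congr fun x => ?_
        exact (lintegral_sub_right_eq_self
          (fun y => ((fun p : ℝ × ℝ => p.1 + p.2) ⁻¹' s).indicator f (x, y)) x).symm
    _ = ∫⁻ x, ∫⁻ z, s.indicator (fun z => f (x, z - x)) z := by
        refine lintegral_congr fun x => lintegral_congr fun z => ?_
        by_cases hz : z ∈ s <;>
          simp [Set.indicator, hz, add_sub_cancel]
    _ = ∫⁻ z, ∫⁻ x, s.indicator (fun z => f (x, z - x)) z := by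
        exact lintegral_lintegral_swap hF.aemeasurable
    _ = ∫⁻ z, s.indicator (fun z => ∫⁻ x, f (x, z - x)) z := by
        refine lintegral_congr fun z => ?_
        by_cases hz : z ∈ s <;> simp [Set.indicator, hz]
    _ = ∫⁻ z in s, ∫⁻ w, f (w, z - w) := by rw [lintegral_indicator hs]
end

section
/- Let f : ℝ → ℝ≥0∞ be measurable. Then (volume.withDensity f).map (fun x => x⁻¹) = volume.withDensity (fun z => f z⁻¹ * ENNReal.ofReal (1 / z ^ 2)); that is, if x has density f with respect to Lebesgue measure then 1/x has density z ↦ f(1/z)·(1/z²). -/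
/-!
Inversion is an involution of `ℝ`, so the preimage of a set under it is its image, and it is a
diffeomorphism off the null set `{0}` with `|d(x⁻¹)/dx| = 1 / x ^ 2`. The one-dimensional change of
variables formula then turns `∫⁻ x in s⁻¹, f x` into `∫⁻ z in s, f z⁻¹ / z ^ 2`.
-/

open MeasureTheory Set Function
open scoped ENNReal

theorem map_withDensity_of_involutive {g g' : ℝ → ℝ} {N : Set ℝ} (hg : Involutive g)
    (hgm : Measurable g) (hN : N.Countable) (hg' : ∀ x ∉ N, HasDerivAt g (g' x) x)
    (f : ℝ → ℝ≥0∞) :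
    (volume.withDensity f).map g =
      volume.withDensity (fun z => f (g z) * ENNReal.ofReal |g' z|) := by
  ext s hs
  have hsN : MeasurableSet (s \ N) := hs.diff hN.measurableSet
  have hg'sN : ∀ x ∈ s \ N, HasDerivWithinAt g (g' x) (s \ N) x := fun x hx =>
    (hg' x hx.2).hasDerivWithinAt
  have himage : g '' s =ᵐ[volume] g '' (s \ N) := by
    conv_lhs => rw [← sdiff_union_inter s N, image_union]
    exact union_ae_eq_left_of_ae_eq_empty
      (ae_eq_empty.mpr (((hN.mono inter_subset_right).image g).measure_zero volume))
  calc (volume.withDensity f).map g s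
      = ∫⁻ x in g '' s, f x := by
        rw [Measure.map_apply hgm hs, withDensity_apply _ (hgm hs), hg.image_eq_preimage_symm]
    _ = ∫⁻ x in g '' (s \ N), f x := setLIntegral_congr himage
    _ = ∫⁻ z in s \ N, ENNReal.ofReal |g' z| * f (g z) :=
        lintegral_image_eq_lintegral_abs_deriv_mul hsN hg'sN hg.injective.injOn f
    _ = ∫⁻ z in s, f (g z) * ENNReal.ofReal |g' z| := by
        simp_rw [mul_comm (ENNReal.ofReal _)]
        exact setLIntegral_congr (sdiff_null_ae_eq_self (hN.measure_zero volume))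
    _ = volume.withDensity (fun z => f (g z) * ENNReal.ofReal |g' z|) s :=
        (withDensity_apply _ hs).symm

theorem density_of_inverse_general (f : ℝ → ℝ≥0∞) :
    (volume.withDensity f).map (fun x : ℝ => x⁻¹) =
      volume.withDensity (fun z => f z⁻¹ * ENNReal.ofReal (1 / z ^ 2)) := by
  rw [map_withDensity_of_involutive inv_involutive measurable_inv (countable_singleton 0)
    (fun x hx => hasDerivAt_inv (mt mem_singleton_iff.mpr hx)) f]
  congr with z
  rw [abs_neg, abs_of_nonneg (inv_nonneg.mpr (sq_nonneg z)), one_div]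

theorem density_of_inverse (f : ℝ → ℝ≥0∞) (hf : Measurable f) :
    (volume.withDensity f).map (fun x : ℝ => x⁻¹) =
      volume.withDensity (fun z => f z⁻¹ * ENNReal.ofReal (1 / z ^ 2)) :=
  density_of_inverse_general f
end

section
/- Let f : ℝ → ℝ≥0∞ be measurable. Then (volume.withDensity f).map Real.exp = volume.withDensity (fun z => if 0 < z then f (Real.log z) * ENNReal.ofReal (1 / z) else 0); that is, if x has density f with respect to Lebesgue measure then exp(x) has density z ↦ f(log z)·(1/z) for z > 0 and density 0 for z ≤ 0. -/
open MeasureTheory Set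
open scoped ENNReal

theorem map_withDensity_eq_withDensity_indicator_range {φ φ' : ℝ → ℝ}
    (hφ : ∀ x, HasDerivAt φ (φ' x) x) (hinj : Function.Injective φ) {f g : ℝ → ℝ≥0∞}
    (hfg : ∀ x, ENNReal.ofReal |φ' x| * g (φ x) = f x) :
    (volume.withDensity f).map φ = volume.withDensity ((range φ).indicator g) := by
  have hφ_cont : Continuous φ := continuous_iff_continuousAt.2 fun x => (hφ x).continuousAt
  have hrange : MeasurableSet (range φ) :=
    hφ_cont.measurableEmbedding hinj |>.measurableSet_range
  ext s hs
  have hpre : MeasurableSet (φ ⁻¹' s) := hφ_cont.measurable hs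
  have himage : range φ ∩ s = φ '' (φ ⁻¹' s) := by
    rw [image_preimage_eq_inter_range, inter_comm]
  rw [Measure.map_apply hφ_cont.measurable hs, withDensity_apply _ hpre, withDensity_apply _ hs,
    lintegral_indicator hrange, Measure.restrict_restrict hrange, himage,
    lintegral_image_eq_lintegral_abs_deriv_mul hpre (fun x _ => (hφ x).hasDerivWithinAt)
      hinj.injOn]
  simp only [hfg]

theorem density_of_exp_general (f : ℝ → ℝ≥0∞) :
    (volume.withDensity f).map Real.exp =
      volume.withDensity
        (fun z => if 0 < z then f (Real.log z) * ENNReal.ofReal (1 / z) else 0) := by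
  have hdensity : (fun z => if 0 < z then f (Real.log z) * ENNReal.ofReal (1 / z) else 0) =
      (range Real.exp).indicator fun z => f (Real.log z) * ENNReal.ofReal (1 / z) := by
    ext z
    simp only [Real.range_exp, indicator, mem_Ioi]
  rw [hdensity]
  refine map_withDensity_eq_withDensity_indicator_range Real.hasDerivAt_exp Real.exp_injective
    fun x => ?_
  have hexp : 0 < Real.exp x := Real.exp_pos x
  rw [Real.log_exp, abs_of_pos hexp, mul_left_comm, ← ENNReal.ofReal_mul hexp.le,
    mul_one_div_cancel hexp.ne', ENNReal.ofReal_one, mul_one]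

theorem density_of_exp (f : ℝ → ℝ≥0∞) (hf : Measurable f) :
    (volume.withDensity f).map Real.exp =
      volume.withDensity
        (fun z => if 0 < z then f (Real.log z) * ENNReal.ofReal (1 / z) else 0) :=
  density_of_exp_general f
end

section
/- Let f : ℝ → ℝ≥0∞ be measurable and suppose f z = 0 for all z ≤ 0 (the distribution is supported on the positive reals). Then (volume.withDensity f).map Real.log = volume.withDensity (fun z => f (Real.exp z) * ENNReal.ofReal (Real.exp z)); that is, if x has density f vanishing on nonpositive reals then log x has density z ↦ f(exp z)·exp z. -/
/-!
Since `f` vanishes off `Ioi 0 = range exp`, the mass that `f` puts on `log ⁻¹' s` equals its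
integral over `exp '' s`, and the one-dimensional change of variables `x = exp z` turns that
integral into `∫⁻ z in s, f (exp z) * exp z`.
-/

open MeasureTheory Set
open scoped ENNReal

theorem MeasureTheory.setLIntegral_eq_inter_of_support_subset {α : Type*} [MeasurableSpace α]
    {μ : Measure α} {f : α → ℝ≥0∞} {s t : Set α} (ht : MeasurableSet t) (hf : f.support ⊆ t) :
    ∫⁻ x in s, f x ∂μ = ∫⁻ x in t ∩ s, f x ∂μ := by
  rw [← Measure.restrict_restrict ht, setLIntegral_eq_of_support_subset hf]

theorem Real.image_exp_eq_Ioi_inter_preimage_log (s : Set ℝ) :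
    Real.exp '' s = Ioi 0 ∩ Real.log ⁻¹' s := by
  rw [Function.LeftInverse.image_eq Real.log_exp, Real.range_exp]

theorem density_of_log_general (f : ℝ → ℝ≥0∞)
    (hpos : ∀ z : ℝ, z ≤ 0 → f z = 0) :
    (volume.withDensity f).map Real.log =
      volume.withDensity
        (fun z => f (Real.exp z) * ENNReal.ofReal (Real.exp z)) := by
  ext s hs
  have hsupp : f.support ⊆ Ioi 0 := fun x hx => not_le.1 fun hx' => hx (hpos x hx')
  calc (volume.withDensity f).map Real.log s
      = ∫⁻ x in Real.log ⁻¹' s, f x := by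
        rw [Measure.map_apply Real.measurable_log hs,
          withDensity_apply _ (Real.measurable_log hs)]
    _ = ∫⁻ x in Real.exp '' s, f x := by
        rw [Real.image_exp_eq_Ioi_inter_preimage_log,
          ← setLIntegral_eq_inter_of_support_subset measurableSet_Ioi hsupp]
    _ = ∫⁻ z in s, ENNReal.ofReal |Real.exp z| * f (Real.exp z) :=
        lintegral_image_eq_lintegral_abs_deriv_mul hs
          (fun z _ => (Real.hasDerivAt_exp z).hasDerivWithinAt) Real.exp_injective.injOn f
    _ = _ := by
        rw [withDensity_apply _ hs]
        refine setLIntegral_congr_fun hs fun z _ => ?_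
        rw [abs_of_pos (Real.exp_pos z), mul_comm]

theorem density_of_log (f : ℝ → ℝ≥0∞) (hf : Measurable f)
    (hpos : ∀ z : ℝ, z ≤ 0 → f z = 0) :
    (volume.withDensity f).map Real.log =
      volume.withDensity
        (fun z => f (Real.exp z) * ENNReal.ofReal (Real.exp z)) :=
  density_of_log_general f hpos
end

section
/- Let μ be the measure on ℝ obtained by drawing p uniformly from [0,1] and then returning p + 1 with probability p and p with probability 1 − p; formally, μ = (volume.restrict (Set.Icc (0:ℝ) 1)).bind (fun p => ENNReal.ofReal p • Measure.dirac (p + 1) + ENNReal.ofReal (1 − p) • Measure.dirac p). Then μ = volume.withDensity (fun z => ENNReal.ofReal ((if 1 ≤ z ∧ z ≤ 2 then z − 1 else 0) + (if 0 ≤ z ∧ z ≤ 1 then 1 − z else 0))); that is, this program has probability density function z ↦ [1 ≤ z ≤ 2]·(z − 1) + [0 ≤ z ≤ 1]·(1 − z) with respect to Lebesgue measure. -/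
/-!
Given `p`, the program returns the mixture `p • δ (p + 1) + (1 - p) • δ p`, so its law is the
uniform law weighted by the density `p` and pushed forward by `· + 1`, plus the uniform law
weighted by `1 - p`. Translation invariance of Lebesgue measure moves the first density to
`z ↦ z - 1` on `[1, 2]`, and the sum of the two densities is the claimed one.
-/

open MeasureTheory
open scoped ENNReal

namespace MeasureTheory.Measure

variable {α β : Type*} [MeasurableSpace α] [MeasurableSpace β]

lemma bind_add_of_measurable (μ : Measure α) {κ η : α → Measure β}
    (hκ : Measurable κ) (hη : Measurable η) :
    μ.bind (fun x => κ x + η x) = μ.bind κ + μ.bind η := by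
  ext s hs
  rw [bind_apply (f := fun x => κ x + η x) hs (hκ.add hη).aemeasurable, coe_add, Pi.add_apply,
    bind_apply hs hκ.aemeasurable, bind_apply hs hη.aemeasurable]
  exact lintegral_add_left ((measurable_coe hs).comp hκ) _

lemma measurable_smul_dirac {f : α → ℝ≥0∞} {φ : α → β} (hf : Measurable f) (hφ : Measurable φ) :
    Measurable (fun x => f x • dirac (φ x)) := by
  refine measurable_of_measurable_coe _ fun s hs => ?_
  simp only [smul_apply, dirac_apply' _ hs, smul_eq_mul]
  exact hf.mul ((measurable_one.indicator hs).comp hφ)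

lemma bind_smul_dirac (μ : Measure α) {f : α → ℝ≥0∞} {φ : α → β}
    (hf : Measurable f) (hφ : Measurable φ) :
    μ.bind (fun x => f x • dirac (φ x)) = (μ.withDensity f).map φ := by
  ext s hs
  rw [bind_apply hs (measurable_smul_dirac hf hφ).aemeasurable, map_apply hφ hs,
    withDensity_apply _ (hφ hs), ← lintegral_indicator (hφ hs)]
  congr 1 with x
  by_cases hx : φ x ∈ s <;> simp [dirac_apply' _ hs, hx]

lemma map_withDensity_add_right {G : Type*} [MeasurableSpace G] [AddGroup G] [MeasurableAdd G]
    (μ : Measure G) [μ.IsAddRightInvariant] (f : G → ℝ≥0∞) (g : G) :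
    (μ.withDensity f).map (· + g) = μ.withDensity (fun x => f (x - g)) := by
  ext s hs
  rw [map_apply (measurable_add_const g) hs, withDensity_apply _ (measurable_add_const g hs),
    withDensity_apply _ hs, ← (measurePreserving_add_right μ g).setLIntegral_comp_preimage_emb
      (measurableEmbedding_addRight g) (fun x => f (x - g))]
  simp only [add_sub_cancel_right]

end MeasureTheory.Measure

lemma indicator_Icc_ofReal_sub_one (z : ℝ) :
    (Set.Icc (0:ℝ) 1).indicator ENNReal.ofReal (z - 1) =
      ENNReal.ofReal (if 1 ≤ z ∧ z ≤ 2 then z - 1 else 0) := by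
  simp only [Set.indicator_apply, Set.mem_Icc, sub_nonneg, tsub_le_iff_right, one_add_one_eq_two,
    apply_ite ENNReal.ofReal, ENNReal.ofReal_zero]

lemma indicator_Icc_ofReal_one_sub (z : ℝ) :
    (Set.Icc (0:ℝ) 1).indicator (fun p => ENNReal.ofReal (1 - p)) z =
      ENNReal.ofReal (if 0 ≤ z ∧ z ≤ 1 then 1 - z else 0) := by
  simp only [Set.indicator_apply, Set.mem_Icc, apply_ite ENNReal.ofReal, ENNReal.ofReal_zero]

theorem uniform_bernoulli_program_pdf :
    (volume.restrict (Set.Icc (0:ℝ) 1)).bind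
        (fun p => ENNReal.ofReal p • Measure.dirac (p + 1) +
          ENNReal.ofReal (1 - p) • Measure.dirac p) =
      volume.withDensity
        (fun z => ENNReal.ofReal
          ((if 1 ≤ z ∧ z ≤ 2 then z - 1 else 0) +
           (if 0 ≤ z ∧ z ≤ 1 then 1 - z else 0))) := by
  have hp : Measurable ENNReal.ofReal := ENNReal.measurable_ofReal
  have hq : Measurable fun p : ℝ => ENNReal.ofReal (1 - p) := by fun_prop
  have hshift : Measurable fun z : ℝ => (Set.Icc (0:ℝ) 1).indicator ENNReal.ofReal (z - 1) :=
    (hp.indicator measurableSet_Icc).comp (measurable_sub_const 1)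
  calc _ = ((volume.restrict (Set.Icc (0:ℝ) 1)).withDensity ENNReal.ofReal).map (· + 1) +
        (volume.restrict (Set.Icc (0:ℝ) 1)).withDensity (fun p => ENNReal.ofReal (1 - p)) := by
        rw [Measure.bind_add_of_measurable _
            (Measure.measurable_smul_dirac hp (measurable_add_const 1))
            (Measure.measurable_smul_dirac (φ := fun p => p) hq measurable_id),
          Measure.bind_smul_dirac _ hp (measurable_add_const 1),
          Measure.bind_smul_dirac (φ := fun p => p) _ hq measurable_id, Measure.map_id']
    _ = volume.withDensity (fun z => (Set.Icc (0:ℝ) 1).indicator ENNReal.ofReal (z - 1)) +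
        volume.withDensity ((Set.Icc (0:ℝ) 1).indicator fun p => ENNReal.ofReal (1 - p)) := by
        rw [← withDensity_indicator measurableSet_Icc, ← withDensity_indicator measurableSet_Icc,
          Measure.map_withDensity_add_right]
    _ = _ := by
        rw [← withDensity_add_left hshift]
        congr with z
        rw [Pi.add_apply, indicator_Icc_ofReal_sub_one, indicator_Icc_ofReal_one_sub,
          ← ENNReal.ofReal_add] <;> split_ifs <;> linarith
end
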